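/- arXiv:2010.04610 — 2 statements merged into one kernel-verified Lean document; each statement's English description precedes it below -/
import Mathlib

section
/- Suppose X ~ N(μ, λ²) for some μ ∈ ℝ and λ > 0. Then E[(e^X − 1)²] ≤ (e^{μ+λ²} + 1)² (8|μ| + 6λ²). -/
/-!
Expanding the square, `E[(e^X - 1)²] = M(2) - 2 M(1) + 1` for the moment generating function
`M(t) = exp (μ t + λ² t² / 2)`, i.e. `exp (2μ + 2λ²) - 2 exp (μ + λ²/2) + 1`. Writing this as
`(e^(μ+λ²) - 1)² + 2 e^(μ+λ²/2) (e^(λ²/2) - 1)`, the first term is bounded by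
`(e^x - 1)² ≤ 4|x| (e^x + 1)²` and the second by `e^y - 1 ≤ y e^y`.
-/

open MeasureTheory ProbabilityTheory Real

lemma Real.exp_sub_one_le_mul_exp (x : ℝ) : exp x - 1 ≤ x * exp x := by
  have h := add_one_le_exp (-x)
  have hinv : exp (-x) * exp x = 1 := by rw [← exp_add, neg_add_cancel, exp_zero]
  nlinarith [exp_pos x]

lemma Real.exp_sub_one_sq_le (x : ℝ) : (exp x - 1) ^ 2 ≤ 4 * |x| * (exp x + 1) ^ 2 := by
  have h_one_le : 1 ≤ (exp x + 1) ^ 2 := by nlinarith [exp_pos x]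
  rcases le_or_gt |x| 1 with hx | hx
  · have h_small : (exp x - 1) ^ 2 ≤ 4 * |x| := by
      calc (exp x - 1) ^ 2 = |exp x - 1| ^ 2 := (sq_abs _).symm
        _ ≤ (2 * |x|) ^ 2 := by gcongr; exact abs_exp_sub_one_le hx
        _ ≤ 4 * |x| := by nlinarith [abs_nonneg x]
    nlinarith [abs_nonneg x]
  · have h_large : (exp x - 1) ^ 2 ≤ (exp x + 1) ^ 2 := by nlinarith [exp_pos x]
    nlinarith

lemma integral_exp_sub_one_sq {Ω : Type*} [MeasurableSpace Ω] {P : Measure Ω}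
    [IsProbabilityMeasure P] {X : Ω → ℝ} (h₁ : Integrable (fun ω ↦ exp (1 * X ω)) P)
    (h₂ : Integrable (fun ω ↦ exp (2 * X ω)) P) :
    ∫ ω, (exp (X ω) - 1) ^ 2 ∂P = mgf X P 2 - 2 * mgf X P 1 + 1 := by
  have h_expand : ∀ ω, (exp (X ω) - 1) ^ 2 = exp (2 * X ω) - 2 * exp (1 * X ω) + 1 := by
    intro ω
    rw [two_mul, exp_add, one_mul]
    ring
  simp_rw [h_expand]
  have h_diff : Integrable (fun ω ↦ exp (2 * X ω) - 2 * exp (1 * X ω)) P :=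
    h₂.sub (h₁.const_mul 2)
  rw [integral_add h_diff (integrable_const 1),
    integral_sub h₂ (h₁.const_mul 2), integral_const_mul, integral_const, probReal_univ,
    one_smul, mgf, mgf]

lemma exp_two_mul_sub_two_mul_exp_add_one_le (m : ℝ) {s : ℝ} (hs : 0 ≤ s) :
    exp (2 * m + 2 * s) - 2 * exp (m + s / 2) + 1 ≤ (exp (m + s) + 1) ^ 2 * (8 * |m| + 6 * s) := by
  have h_split : exp (m + s) = exp (m + s / 2) * exp (s / 2) := by rw [← exp_add]; ring_nf
  have h_eq : exp (2 * m + 2 * s) - 2 * exp (m + s / 2) + 1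
      = (exp (m + s) - 1) ^ 2 + 2 * exp (m + s / 2) * (exp (s / 2) - 1) := by
    rw [show 2 * m + 2 * s = (m + s) + (m + s) by ring, exp_add, h_split]
    ring
  have h_sq : (exp (m + s) - 1) ^ 2 ≤ 4 * (|m| + s) * (exp (m + s) + 1) ^ 2 := by
    have h_abs : |m + s| ≤ |m| + s := (abs_add_le m s).trans (by rw [abs_of_nonneg hs])
    calc (exp (m + s) - 1) ^ 2 ≤ 4 * |m + s| * (exp (m + s) + 1) ^ 2 := exp_sub_one_sq_le _
      _ ≤ 4 * (|m| + s) * (exp (m + s) + 1) ^ 2 := by gcongr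
  have h_corr : 2 * exp (m + s / 2) * (exp (s / 2) - 1) ≤ s * (exp (m + s) + 1) ^ 2 := by
    calc 2 * exp (m + s / 2) * (exp (s / 2) - 1)
        ≤ 2 * exp (m + s / 2) * (s / 2 * exp (s / 2)) := by
          gcongr; exact exp_sub_one_le_mul_exp _
      _ = s * exp (m + s) := by rw [h_split]; ring
      _ ≤ s * (exp (m + s) + 1) ^ 2 := by gcongr; nlinarith [exp_pos (m + s)]
  rw [h_eq]
  nlinarith [abs_nonneg m, sq_nonneg (exp (m + s) + 1)]

theorem stmt_2_general {Ω : Type*} [MeasurableSpace Ω] (P : Measure Ω) [IsProbabilityMeasure P]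
    (X : Ω → ℝ) (μ lam : ℝ)
    (hX : Measure.map X P = gaussianReal μ (Real.toNNReal (lam ^ 2))) :
    ∫ ω, (Real.exp (X ω) - 1) ^ 2 ∂P ≤
      (Real.exp (μ + lam ^ 2) + 1) ^ 2 * (8 * |μ| + 6 * lam ^ 2) := by
  have h_mgf (t : ℝ) : mgf X P t = exp (μ * t + lam ^ 2 * t ^ 2 / 2) := by
    rw [mgf_gaussianReal hX, Real.coe_toNNReal _ (sq_nonneg lam)]
  have h_int (t : ℝ) : Integrable (fun ω ↦ exp (t * X ω)) P := by
    rw [← mgf_pos_iff, h_mgf]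
    exact exp_pos _
  rw [integral_exp_sub_one_sq (h_int 1) (h_int 2), h_mgf, h_mgf]
  convert exp_two_mul_sub_two_mul_exp_add_one_le μ (sq_nonneg lam) using 4 <;> ring_nf

/-- If `X ~ N(μ, λ²)` then `E[(e^X - 1)²] ≤ (e^{μ+λ²} + 1)² (8|μ| + 6λ²)`. -/
theorem stmt_2 {Ω : Type*} [MeasurableSpace Ω] (P : Measure Ω) [IsProbabilityMeasure P]
    (X : Ω → ℝ) (μ lam : ℝ) (hlam : 0 < lam)
    (hX : Measure.map X P = gaussianReal μ (Real.toNNReal (lam ^ 2))) :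
    ∫ ω, (Real.exp (X ω) - 1) ^ 2 ∂P ≤
      (Real.exp (μ + lam ^ 2) + 1) ^ 2 * (8 * |μ| + 6 * lam ^ 2) :=
  stmt_2_general P X μ lam hX
end

section
/- Let κ : [0,∞) → ℝ satisfy: (a) κ(ℓ) → 0 as ℓ → ∞; (b) there is an integrable φ : [−1,1] → ℝ with κ(ℓ+y)/κ(ℓ) → φ(y) as ℓ → ∞ for each y ∈ [−1,1]; and (c) limsup_{ℓ→∞} sup_{y∈[−1,1]} |κ(ℓ+y)/κ(ℓ)| < ∞, with κ(ℓ) > 0 for all large ℓ. Define γ(ℓ) = ξ² ∫_0^1 (1−y)[ exp(κ(|ℓ−y|)) − 1 + exp(κ(ℓ+y)) − 1 ] dy for ξ > 0. Then γ(ℓ) / (ξ² κ(ℓ)) → ∫_{−1}^1 (1−|y|) φ(y) dy as ℓ → ∞. -/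
/-!
As `κ → 0`, `e^{κ(ℓ+y)} - 1 ~ κ(ℓ+y) ~ φ(y) κ(ℓ)` for each `y`, and the ratios
`(e^{κ(ℓ+y)} - 1) / κ(ℓ)` are eventually uniformly bounded by (c), because `|eˣ - 1| ≤ 2|x|` for
`|x| ≤ 1`. For `ℓ ≥ 1` the substitution `y ↦ -y` in the first term turns the integral defining
`γ(ℓ)` into `ξ² ∫_{-1}^1 (1 - |y|)(e^{κ(ℓ+y)} - 1) dy`, and dominated convergence concludes.
-/

open MeasureTheory Filter Set Topology

lemma Real.tendsto_exp_sub_one_div_nhdsNE :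
    Tendsto (fun x : ℝ => (Real.exp x - 1) / x) (𝓝[≠] 0) (𝓝 1) := by
  have h := hasDerivAt_iff_tendsto_slope.mp (Real.hasDerivAt_exp 0)
  simp only [Real.exp_zero] at h
  exact h.congr fun x => by simp [slope_def_field]

lemma Filter.Tendsto.exp_sub_one_div {α : Type*} {l : Filter α} {u v : α → ℝ} {c : ℝ}
    (hu : Tendsto u l (𝓝 0)) (hu₀ : ∀ᶠ a in l, u a ≠ 0)
    (huv : Tendsto (fun a => u a / v a) l (𝓝 c)) :
    Tendsto (fun a => (Real.exp (u a) - 1) / v a) l (𝓝 c) := by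
  have hexp : Tendsto (fun a => (Real.exp (u a) - 1) / u a) l (𝓝 1) :=
    Real.tendsto_exp_sub_one_div_nhdsNE.comp (tendsto_nhdsWithin_iff.mpr ⟨hu, hu₀⟩)
  refine (one_mul c ▸ hexp.mul huv).congr' ?_
  filter_upwards [hu₀] with a ha
  rw [div_mul_div_cancel₀ ha]

lemma tendsto_exp_comp_add_sub_one_div {κ : ℝ → ℝ} {y c : ℝ} (ha : Tendsto κ atTop (𝓝 0))
    (hne : ∀ᶠ ℓ in atTop, κ ℓ ≠ 0) (hb : Tendsto (fun ℓ => κ (ℓ + y) / κ ℓ) atTop (𝓝 c)) :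
    Tendsto (fun ℓ => (Real.exp (κ (ℓ + y)) - 1) / κ ℓ) atTop (𝓝 c) := by
  have hshift : Tendsto (· + y) atTop atTop := tendsto_atTop_add_const_right _ y tendsto_id
  exact (ha.comp hshift).exp_sub_one_div (hshift.eventually hne) hb

lemma exists_eventually_abs_exp_comp_add_sub_one_div_le {κ : ℝ → ℝ} {s : Set ℝ}
    (ha : Tendsto κ atTop (𝓝 0)) (hc : ∃ C, ∀ᶠ ℓ in atTop, ∀ y ∈ s, |κ (ℓ + y) / κ ℓ| ≤ C) :
    ∃ C, ∀ᶠ ℓ in atTop, ∀ y ∈ s, |(Real.exp (κ (ℓ + y)) - 1) / κ ℓ| ≤ C := by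
  obtain ⟨C, hC⟩ := hc
  set C₀ := max C 0
  have hsmall : ∀ᶠ ℓ in atTop, C₀ * |κ ℓ| ≤ 1 := by
    have : Tendsto (fun ℓ => C₀ * |κ ℓ|) atTop (𝓝 0) := by
      simpa using (ha.abs.const_mul C₀)
    exact this.eventually (ge_mem_nhds zero_lt_one)
  refine ⟨2 * C₀, ?_⟩
  filter_upwards [hC, hsmall] with ℓ hCℓ hsmallℓ y hy
  rcases eq_or_ne (κ ℓ) 0 with h0 | h0
  · simp [h0, C₀]
  have hκ : |κ (ℓ + y)| ≤ C₀ * |κ ℓ| := by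
    have := hCℓ y hy
    rw [abs_div, div_le_iff₀ (abs_pos.mpr h0)] at this
    exact this.trans (by gcongr; exact le_max_left _ _)
  rw [abs_div, div_le_iff₀ (abs_pos.mpr h0)]
  calc |Real.exp (κ (ℓ + y)) - 1| ≤ 2 * |κ (ℓ + y)| := Real.abs_exp_sub_one_le (hκ.trans hsmallℓ)
    _ ≤ 2 * C₀ * |κ ℓ| := by rw [mul_assoc]; gcongr

lemma intervalIntegral.integral_neg_to_self_eq_integral_comp_neg_add {E : Type*}
    [NormedAddCommGroup E] [NormedSpace ℝ E] {f : ℝ → E} {a : ℝ} (ha : 0 ≤ a) (hf : IntervalIntegrable f volume (-a) a) :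
    ∫ x in -a..a, f x = ∫ x in 0..a, (f (-x) + f x) := by
  have hneg : IntervalIntegrable f volume (-a) 0 := hf.mono_set (by
    rw [uIcc_of_le (by linarith), uIcc_of_le (by linarith)]; exact Icc_subset_Icc le_rfl ha)
  have hpos : IntervalIntegrable f volume 0 a := hf.mono_set (by
    rw [uIcc_of_le ha, uIcc_of_le (by linarith)]; exact Icc_subset_Icc (by linarith) le_rfl)
  have hneg' : IntervalIntegrable (fun x => f (-x)) volume 0 a := by
    simpa using ((IntervalIntegrable.iff_comp_neg (by simp)).mp hneg).symm
  rw [intervalIntegral.integral_add hneg' hpos, intervalIntegral.integral_comp_neg,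
    neg_zero, intervalIntegral.integral_add_adjacent_intervals hneg hpos]

lemma integral_one_sub_mul_exp_sub_one_eq {κ : ℝ → ℝ} (hκ : Continuous κ) {ℓ : ℝ} (hℓ : 1 ≤ ℓ) :
    ∫ y in (0:ℝ)..1, (1 - y) * ((Real.exp (κ |ℓ - y|) - 1) + (Real.exp (κ (ℓ + y)) - 1)) =
      ∫ y in (-1:ℝ)..1, (1 - |y|) * (Real.exp (κ (ℓ + y)) - 1) := by
  have hint : IntervalIntegrable (fun y => (1 - |y|) * (Real.exp (κ (ℓ + y)) - 1)) volume (-1) 1 :=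
    (by fun_prop : Continuous _).intervalIntegrable _ _
  rw [intervalIntegral.integral_neg_to_self_eq_integral_comp_neg_add zero_le_one hint]
  refine intervalIntegral.integral_congr fun y hy => ?_
  rw [uIcc_of_le zero_le_one] at hy
  simp only [abs_neg, abs_of_nonneg hy.1, abs_of_nonneg (by linarith [hy.2] : 0 ≤ ℓ - y),
    ← sub_eq_add_neg]
  ring

theorem stmt_10_general (κ : ℝ → ℝ) (φ : ℝ → ℝ) (ξ : ℝ) (hξ : 0 < ξ)
    (hκcont : Continuous κ)
    (ha : Tendsto κ atTop (nhds 0))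
    (hb : ∀ y ∈ Set.Icc (-1 : ℝ) 1,
      Tendsto (fun ℓ : ℝ => κ (ℓ + y) / κ ℓ) atTop (nhds (φ y)))
    (hc : ∃ C : ℝ, ∀ᶠ ℓ : ℝ in atTop, ∀ y ∈ Set.Icc (-1 : ℝ) 1, |κ (ℓ + y) / κ ℓ| ≤ C)
    (hpos : ∀ᶠ ℓ : ℝ in atTop, 0 < κ ℓ) :
    Tendsto
      (fun ℓ : ℝ =>
        (ξ ^ 2 * ∫ y in (0:ℝ)..1,
            (1 - y) * ((Real.exp (κ |ℓ - y|) - 1) + (Real.exp (κ (ℓ + y)) - 1))) /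
          (ξ ^ 2 * κ ℓ))
      atTop (nhds (∫ y in (-1 : ℝ)..1, (1 - |y|) * φ y)) := by
  obtain ⟨C, hC⟩ := exists_eventually_abs_exp_comp_add_sub_one_div_le ha hc
  set F : ℝ → ℝ → ℝ := fun ℓ y => (Real.exp (κ (ℓ + y)) - 1) / κ ℓ
  have hquot : ∀ᶠ ℓ in atTop, ∫ y in (-1:ℝ)..1, (1 - |y|) * F ℓ y = (ξ ^ 2 * ∫ y in (0:ℝ)..1,
        (1 - y) * ((Real.exp (κ |ℓ - y|) - 1) + (Real.exp (κ (ℓ + y)) - 1))) / (ξ ^ 2 * κ ℓ) := by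
    filter_upwards [eventually_ge_atTop 1] with ℓ hℓ
    rw [mul_div_mul_left _ _ (pow_ne_zero 2 hξ.ne'),
      integral_one_sub_mul_exp_sub_one_eq hκcont hℓ, ← intervalIntegral.integral_div]
    simp only [F, mul_div_assoc]
  have hIoc : ∀ y ∈ uIoc (-1 : ℝ) 1, y ∈ Icc (-1 : ℝ) 1 := fun y hy => by
    rw [uIoc_of_le (by norm_num)] at hy; exact Ioc_subset_Icc_self hy
  refine Tendsto.congr' hquot <|
    intervalIntegral.tendsto_integral_filter_of_dominated_convergence (fun _ => C)
      (Eventually.of_forall fun ℓ => ?_) ?_ intervalIntegrable_const ?_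
  · exact (by fun_prop : Continuous fun y => (1 - |y|) * F ℓ y).aestronglyMeasurable
  · filter_upwards [hC] with ℓ hCℓ
    refine Eventually.of_forall fun y hy => ?_
    have hy' := hIoc y hy
    have hw : ‖1 - |y|‖ ≤ 1 := by
      have := abs_le.mpr hy'
      rw [Real.norm_eq_abs, abs_le]; constructor <;> linarith [abs_nonneg y]
    calc ‖(1 - |y|) * F ℓ y‖ = ‖1 - |y|‖ * ‖F ℓ y‖ := norm_mul _ _
      _ ≤ 1 * C := by gcongr; exact hCℓ y hy'
      _ = C := one_mul C
  · have hne : ∀ᶠ ℓ in atTop, κ ℓ ≠ 0 := hpos.mono fun _ h => h.ne'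
    exact Eventually.of_forall fun y hy =>
      (tendsto_exp_comp_add_sub_one_div ha hne (hb y (hIoc y hy))).const_mul _

/-- Asymptotic equivalence of the autocovariance of integrated variance:
under (a) `κ(ℓ) → 0`, (b) pointwise convergence `κ(ℓ+y)/κ(ℓ) → φ(y)` with `φ`
integrable, and (c) a uniform bound on the ratios (with `κ(ℓ) > 0` eventually),
the quantity `γ(ℓ) = ξ² ∫_0^1 (1-y)[e^{κ|ℓ-y|} - 1 + e^{κ(ℓ+y)} - 1] dy`
satisfies `γ(ℓ)/(ξ² κ(ℓ)) → ∫_{-1}^1 (1-|y|) φ(y) dy`. -/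
theorem stmt_10 (κ : ℝ → ℝ) (φ : ℝ → ℝ) (ξ : ℝ) (hξ : 0 < ξ)
    (hκcont : Continuous κ)
    (ha : Tendsto κ atTop (nhds 0))
    (hφint : IntegrableOn φ (Set.Icc (-1 : ℝ) 1))
    (hb : ∀ y ∈ Set.Icc (-1 : ℝ) 1,
      Tendsto (fun ℓ : ℝ => κ (ℓ + y) / κ ℓ) atTop (nhds (φ y)))
    (hc : ∃ C : ℝ, ∀ᶠ ℓ : ℝ in atTop, ∀ y ∈ Set.Icc (-1 : ℝ) 1, |κ (ℓ + y) / κ ℓ| ≤ C)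
    (hpos : ∀ᶠ ℓ : ℝ in atTop, 0 < κ ℓ) :
    Tendsto
      (fun ℓ : ℝ =>
        (ξ ^ 2 * ∫ y in (0:ℝ)..1,
            (1 - y) * ((Real.exp (κ |ℓ - y|) - 1) + (Real.exp (κ (ℓ + y)) - 1))) /
          (ξ ^ 2 * κ ℓ))
      atTop (nhds (∫ y in (-1 : ℝ)..1, (1 - |y|) * φ y)) :=
  stmt_10_general κ φ ξ hξ hκcont ha hb hc hpos
end
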